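/- arXiv:2605.30825 — 3 statements merged into one kernel-verified Lean document; each statement's English description precedes it below -/
import Mathlib

section
/- Let p and q be probability mass functions on a finite set X with q(x) > 0 for all x, and let λ ∈ [0,1) be a real number with unlearning distribution q_u(x) > 0 for all x. Define the tilted distribution p*(x) = (q(x)^{1/(1-λ)} / q_u(x)^{λ/(1-λ)}) / Z where Z is the normalizing constant. Then p* minimizes the function L(p) = D_KL(p‖q) − λ·D_KL(p‖q_u) over all probability mass functions p on X. -/
/-!
Expanding the logarithms shows that, with `p*` normalised from `q^{1/(1-λ)} / q_u^{λ/(1-λ)}`,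
`D(p‖q) - λ D(p‖q_u) = (1 - λ) D(p‖p*) - (1 - λ) log Z` for every probability vector `p`.
Since `1 - λ > 0`, Gibbs' inequality `D(p‖p*) ≥ 0 = D(p*‖p*)` finishes the proof.
-/

open Real BigOperators

noncomputable section

variable {X : Type*} [Fintype X]

/-- `p` is a probability mass function on the finite set `X`. -/
def IsPMF (p : X → ℝ) : Prop := (∀ x, 0 ≤ p x) ∧ ∑ x, p x = 1

/-- KL divergence with the convention `0 · log 0 = 0` (automatic since `Real.log 0 = 0`). -/
def klDiv (p q : X → ℝ) : ℝ := ∑ x, p x * Real.log (p x / q x)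

theorem klDiv_self (p : X → ℝ) : klDiv p p = 0 :=
  Finset.sum_eq_zero fun x _ => by
    rcases eq_or_ne (p x) 0 with h | h
    · simp [h]
    · simp [div_self h]

theorem klDiv_nonneg {p r : X → ℝ} (hp : IsPMF p) (hr : IsPMF r) (hr_pos : ∀ x, 0 < r x) :
    0 ≤ klDiv p r := by
  have term_ge : ∀ x, p x - r x ≤ p x * log (p x / r x) := by
    intro x
    rcases (hp.1 x).eq_or_lt with h | h
    · simp [← h, (hr_pos x).le]
    · calc p x - r x = p x * -(r x / p x - 1) := by field_simp; ring
        _ ≤ p x * -log (r x / p x) := by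
          gcongr; exact log_le_sub_one_of_pos (div_pos (hr_pos x) h)
        _ = p x * log (p x / r x) := by rw [← log_inv, inv_div]
  calc (0 : ℝ) = ∑ x, (p x - r x) := by rw [Finset.sum_sub_distrib, hp.2, hr.2, sub_self]
    _ ≤ klDiv p r := Finset.sum_le_sum fun x _ => term_ge x

theorem isPMF_div_sum {w : X → ℝ} (hw : ∀ x, 0 ≤ w x) (hw_sum : ∑ x, w x ≠ 0) :
    IsPMF fun x => w x / ∑ y, w y :=
  ⟨fun x => div_nonneg (hw x) (Finset.sum_nonneg fun y _ => hw y),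
    by rw [← Finset.sum_div, div_self hw_sum]⟩

theorem one_sub_mul_log_rpow_div_rpow {a b lam : ℝ} (ha : 0 < a) (hb : 0 < b) (hlam : lam < 1) :
    (1 - lam) * log (a ^ (1 / (1 - lam)) / b ^ (lam / (1 - lam))) = log a - lam * log b := by
  have : 1 - lam ≠ 0 := by linarith
  rw [log_div (rpow_pos_of_pos ha _).ne' (rpow_pos_of_pos hb _).ne', log_rpow ha, log_rpow hb]
  field_simp

section LogLinear

variable {q qu r : X → ℝ} {lam c : ℝ}

theorem klDiv_sub_mul_klDiv_eq (hq : ∀ x, 0 < q x) (hqu : ∀ x, 0 < qu x) (hr : ∀ x, 0 < r x)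
    (hr_log : ∀ x, (1 - lam) * log (r x) = log (q x) - lam * log (qu x) - c)
    {p : X → ℝ} (hp : ∑ x, p x = 1) :
    klDiv p q - lam * klDiv p qu = (1 - lam) * klDiv p r - c := by
  have term_eq : ∀ x, p x * log (p x / q x) - lam * (p x * log (p x / qu x)) =
      (1 - lam) * (p x * log (p x / r x)) - c * p x := by
    intro x
    rcases eq_or_ne (p x) 0 with h | h
    · simp [h]
    · rw [log_div h (hq x).ne', log_div h (hqu x).ne', log_div h (hr x).ne']
      linear_combination p x * hr_log x
  simp only [klDiv, Finset.mul_sum, ← Finset.sum_sub_distrib, term_eq]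
  rw [Finset.sum_sub_distrib, ← Finset.mul_sum, ← Finset.mul_sum, hp, mul_one]

theorem klDiv_sub_mul_klDiv_le (hlam : lam < 1) (hq : ∀ x, 0 < q x) (hqu : ∀ x, 0 < qu x)
    (hr : IsPMF r) (hr_pos : ∀ x, 0 < r x)
    (hr_log : ∀ x, (1 - lam) * log (r x) = log (q x) - lam * log (qu x) - c)
    {p : X → ℝ} (hp : IsPMF p) :
    klDiv r q - lam * klDiv r qu ≤ klDiv p q - lam * klDiv p qu := by
  rw [klDiv_sub_mul_klDiv_eq hq hqu hr_pos hr_log hr.2,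
    klDiv_sub_mul_klDiv_eq hq hqu hr_pos hr_log hp.2, klDiv_self, mul_zero]
  have := mul_nonneg (sub_nonneg.2 hlam.le) (klDiv_nonneg hp hr hr_pos)
  linarith

end LogLinear

theorem stmt0_general [Nonempty X] (q qu : X → ℝ)
    (hqpos : ∀ x, 0 < q x)
    (hqupos : ∀ x, 0 < qu x)
    (lam : ℝ) (hlam1 : lam < 1)
    (Z : ℝ) (hZ : Z = ∑ x, q x ^ (1 / (1 - lam)) / qu x ^ (lam / (1 - lam)))
    (pstar : X → ℝ)
    (hpstar : ∀ x, pstar x = (q x ^ (1 / (1 - lam)) / qu x ^ (lam / (1 - lam))) / Z) :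
    IsPMF pstar ∧
      ∀ p : X → ℝ, IsPMF p →
        klDiv pstar q - lam * klDiv pstar qu ≤ klDiv p q - lam * klDiv p qu := by
  set w : X → ℝ := fun x => q x ^ (1 / (1 - lam)) / qu x ^ (lam / (1 - lam))
  have hw : ∀ x, 0 < w x := fun x => div_pos (rpow_pos_of_pos (hqpos x) _)
    (rpow_pos_of_pos (hqupos x) _)
  have hZ_pos : 0 < Z := hZ ▸ Finset.sum_pos (fun x _ => hw x) Finset.univ_nonempty
  have hpstar_pos : ∀ x, 0 < pstar x := fun x => hpstar x ▸ div_pos (hw x) hZ_pos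
  have hpstar_pmf : IsPMF pstar := by
    rw [show pstar = fun x => w x / ∑ y, w y from funext fun x => hZ ▸ hpstar x]
    exact isPMF_div_sum (fun x => (hw x).le) (hZ ▸ hZ_pos.ne')
  have hpstar_log : ∀ x, (1 - lam) * log (pstar x) =
      log (q x) - lam * log (qu x) - (1 - lam) * log Z := fun x => by
    rw [hpstar x, log_div (hw x).ne' hZ_pos.ne', mul_sub,
      one_sub_mul_log_rpow_div_rpow (hqpos x) (hqupos x) hlam1]
  exact ⟨hpstar_pmf, fun p hp =>
    klDiv_sub_mul_klDiv_le hlam1 hqpos hqupos hpstar_pmf hpstar_pos hpstar_log hp⟩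

theorem stmt0 [Nonempty X] (q qu : X → ℝ)
    (hq : IsPMF q) (hqpos : ∀ x, 0 < q x)
    (hqu : IsPMF qu) (hqupos : ∀ x, 0 < qu x)
    (lam : ℝ) (hlam0 : 0 ≤ lam) (hlam1 : lam < 1)
    (Z : ℝ) (hZ : Z = ∑ x, q x ^ (1 / (1 - lam)) / qu x ^ (lam / (1 - lam)))
    (pstar : X → ℝ)
    (hpstar : ∀ x, pstar x = (q x ^ (1 / (1 - lam)) / qu x ^ (lam / (1 - lam))) / Z) :
    IsPMF pstar ∧
      ∀ p : X → ℝ, IsPMF p →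
        klDiv pstar q - lam * klDiv pstar qu ≤ klDiv p q - lam * klDiv p qu :=
  stmt0_general q qu hqpos hqupos lam hlam1 Z hZ pstar hpstar
end
end

section
/- Let μ₁, ..., μ_k be finite non-atomic signed measures on a measurable space (Ω, F). Then for every α ∈ [0,1] there exists a measurable set E ∈ F with μ_i(E) = α·μ_i(Ω) for all i = 1, ..., k. (Weak form of Lyapunov's convexity theorem.) -/
/-!
Splitting each signed measure into its Jordan parts reduces the theorem to finitely many finite
atomless measures. For those it suffices to bisect every set simultaneously for all of them: the
binary digits of `α` then select dyadic pieces of the right size.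

Simultaneous bisection is proved by induction on the number of measures. A single atomless measure
takes every intermediate value on subsets (Sierpiński; greedy exhaustion). If `X, A \ X` bisect `A`
for the first measures, one half carries too much and the other too little of the new measure `σ`.
Repeatedly trading halves of their differences keeps the old measures fixed and produces sets
`F ⊆ W` with `σ F ≤ σ A / 2 ≤ σ W` whose gap `W \ F` is null for the old measures; Sierpiński's
theorem for `σ` then fills the gap.
-/

open MeasureTheory Set Filter Topology Function
open scoped symmDiff

theorem exists_seq_of_forall_exists {α : Type*} {P : α → Prop} {R : α → α → Prop}
    (h : ∀ a, P a → ∃ b, P b ∧ R a b) {a₀ : α} (h₀ : P a₀) :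
    ∃ f : ℕ → α, f 0 = a₀ ∧ ∀ n, P (f n) ∧ R (f n) (f (n + 1)) := by
  choose! g hgP hgR using h
  have hP : ∀ n, P (g^[n] a₀) := fun n => by
    induction n with
    | zero => exact h₀
    | succ n ih => rw [Function.iterate_succ_apply']; exact hgP _ ih
  refine ⟨fun n => g^[n] a₀, rfl, fun n => ⟨hP n, ?_⟩⟩
  simpa only [Function.iterate_succ_apply'] using hgR _ (hP n)

theorem exists_hasSum_ofDigitsTerm {α : ℝ} (hα : α ∈ Icc (0 : ℝ) 1) :
    ∃ d : ℕ → Fin 2, HasSum (Real.ofDigitsTerm d) α := by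
  rcases hα.2.lt_or_eq with h1 | rfl
  · exact ⟨Real.digits α 2, Real.hasSum_ofDigitsTerm_digits α one_lt_two ⟨hα.1, h1⟩⟩
  · refine ⟨fun _ => Fin.last 1, ?_⟩
    rw [← Real.ofDigits_const_last_eq_one 1]
    exact Real.summable_ofDigitsTerm.hasSum

namespace MeasureTheory

variable {Ω : Type*} [MeasurableSpace Ω]

def IsAtomless {M : Type*} [Zero M] (f : Set Ω → M) : Prop :=
  ∀ A, MeasurableSet A → f A ≠ 0 → ∃ B ⊆ A, MeasurableSet B ∧ f B ≠ 0 ∧ f B ≠ f A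

section FiniteMeasure

variable {μ : Measure Ω} [IsFiniteMeasure μ]

theorem tendsto_measureReal_iUnion_atTop {f : ℕ → Set Ω} (hf : Monotone f) :
    Tendsto (fun n => μ.real (f n)) atTop (𝓝 (μ.real (⋃ n, f n))) :=
  (ENNReal.tendsto_toReal (measure_ne_top μ _)).comp (tendsto_measure_iUnion_atTop hf)

theorem tendsto_measureReal_iInter_atTop {f : ℕ → Set Ω} (hm : ∀ n, MeasurableSet (f n))
    (hf : Antitone f) : Tendsto (fun n => μ.real (f n)) atTop (𝓝 (μ.real (⋂ n, f n))) :=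
  (ENNReal.tendsto_toReal (measure_ne_top μ _)).comp
    (tendsto_measure_iInter_atTop (fun n => (hm n).nullMeasurableSet) hf ⟨0, measure_ne_top μ _⟩)

theorem hasSum_measureReal_iUnion {f : ℕ → Set Ω} (hm : ∀ n, MeasurableSet (f n))
    (hd : Pairwise (Disjoint on f)) : HasSum (fun n => μ.real (f n)) (μ.real (⋃ n, f n)) := by
  simpa only [Measure.toSignedMeasure_apply_measurable (hm _),
    Measure.toSignedMeasure_apply_measurable (MeasurableSet.iUnion hm)] using
    μ.toSignedMeasure.hasSum_of_disjoint_iUnion hm hd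

theorem IsAtomless.exists_measureReal_pos_le_half (hμ : IsAtomless μ.real) {A : Set Ω}
    (hA : MeasurableSet A) (hA0 : 0 < μ.real A) :
    ∃ B ⊆ A, MeasurableSet B ∧ 0 < μ.real B ∧ μ.real B ≤ μ.real A / 2 := by
  obtain ⟨B, hBA, hB, hB0, hBA'⟩ := hμ A hA hA0.ne'
  rcases le_total (μ.real B) (μ.real A / 2) with h | h
  · exact ⟨B, hBA, hB, measureReal_nonneg.lt_of_ne' hB0, h⟩
  · refine ⟨A \ B, sdiff_subset, hA.diff hB, ?_, ?_⟩ <;> rw [measureReal_sdiff hBA hB]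
    · exact sub_pos.2 ((measureReal_mono hBA).lt_of_ne hBA')
    · linarith

theorem IsAtomless.exists_measureReal_pos_le (hμ : IsAtomless μ.real) {A : Set Ω}
    (hA : MeasurableSet A) (hA0 : 0 < μ.real A) {ε : ℝ} (hε : 0 < ε) :
    ∃ B ⊆ A, MeasurableSet B ∧ 0 < μ.real B ∧ μ.real B ≤ ε := by
  have key : ∀ n : ℕ, ∃ B ⊆ A, MeasurableSet B ∧ 0 < μ.real B ∧
      μ.real B ≤ (1 / 2) ^ n * μ.real A := fun n => by
    induction n with
    | zero => exact ⟨A, subset_rfl, hA, hA0, by simp⟩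
    | succ n ih =>
      obtain ⟨B, hBA, hB, hB0, hBle⟩ := ih
      obtain ⟨C, hCB, hC, hC0, hCle⟩ := hμ.exists_measureReal_pos_le_half hB hB0
      exact ⟨C, hCB.trans hBA, hC, hC0, by rw [pow_succ]; linarith⟩
  obtain ⟨n, hn⟩ := exists_pow_lt_of_lt_one (div_pos hε hA0) (by norm_num : (1 / 2 : ℝ) < 1)
  obtain ⟨B, hBA, hB, hB0, hBle⟩ := key n
  exact ⟨B, hBA, hB, hB0, hBle.trans ((lt_div_iff₀ hA0).1 hn).le⟩

theorem exists_greedy_extension {A C : Set Ω} {c : ℝ} (hCA : C ⊆ A) (hC : MeasurableSet C)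
    (hCc : μ.real C ≤ c) :
    ∃ C', (C' ⊆ A ∧ MeasurableSet C' ∧ μ.real C' ≤ c) ∧ C ⊆ C' ∧
      ∀ D ⊆ A \ C, MeasurableSet D → μ.real C + μ.real D ≤ c →
        μ.real C + μ.real D / 2 ≤ μ.real C' := by
  set T : Set ℝ := μ.real '' {D | D ⊆ A \ C ∧ MeasurableSet D ∧ μ.real C + μ.real D ≤ c}
  have hT0 : 0 ∈ T := ⟨∅, ⟨empty_subset _, .empty, by simpa⟩, measureReal_empty⟩
  have hTbdd : BddAbove T := ⟨μ.real A, by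
    rintro _ ⟨D, ⟨hD, -⟩, rfl⟩
    exact measureReal_mono (hD.trans sdiff_subset)⟩
  have hle : ∀ D ⊆ A \ C, MeasurableSet D → μ.real C + μ.real D ≤ c → μ.real D ≤ sSup T :=
    fun D hD hDm hDc => le_csSup hTbdd ⟨D, ⟨hD, hDm, hDc⟩, rfl⟩
  rcases (le_csSup hTbdd hT0).eq_or_lt with h0 | hpos
  · refine ⟨C, ⟨hCA, hC, hCc⟩, subset_rfl, fun D hD hDm hDc => ?_⟩
    linarith [hle D hD hDm hDc, measureReal_nonneg (μ := μ) (s := D)]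
  · obtain ⟨_, ⟨D, ⟨hD, hDm, hDc⟩, rfl⟩, hDlt⟩ :=
      exists_lt_of_lt_csSup ⟨0, hT0⟩ (half_lt_self hpos)
    have hCD : μ.real (C ∪ D) = μ.real C + μ.real D :=
      measureReal_union (disjoint_sdiff_right.mono_right hD) hDm
    refine ⟨C ∪ D, ⟨union_subset hCA (hD.trans sdiff_subset), hC.union hDm, by linarith⟩,
      subset_union_left, fun D' hD' hD'm hD'c => ?_⟩
    linarith [hle D' hD' hD'm hD'c]

theorem IsAtomless.exists_subset_measureReal_eq (hμ : IsAtomless μ.real) {A : Set Ω}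
    (hA : MeasurableSet A) {c : ℝ} (hc0 : 0 ≤ c) (hcA : c ≤ μ.real A) :
    ∃ B ⊆ A, MeasurableSet B ∧ μ.real B = c := by
  obtain ⟨C, -, hC⟩ := exists_seq_of_forall_exists
    (fun C (hC : C ⊆ A ∧ MeasurableSet C ∧ μ.real C ≤ c) =>
      exists_greedy_extension hC.1 hC.2.1 hC.2.2) (a₀ := ∅) ⟨empty_subset _, .empty, by simpa⟩
  have hlim := tendsto_measureReal_iUnion_atTop (μ := μ)
    (monotone_nat_of_le_succ fun n => (hC n).2.1)
  have hCA : ⋃ n, C n ⊆ A := iUnion_subset fun n => (hC n).1.1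
  have hCm : MeasurableSet (⋃ n, C n) := .iUnion fun n => (hC n).1.2.1
  have hCc : μ.real (⋃ n, C n) ≤ c := le_of_tendsto' hlim fun n => (hC n).1.2.2
  refine ⟨⋃ n, C n, hCA, hCm, hCc.antisymm (not_lt.1 fun hlt => ?_)⟩
  -- A piece of the leftover small enough to fit below `c` was available to every greedy step,
  -- so the increments of `μ.real (C n)` could not tend to zero.
  obtain ⟨D, hD, hDm, hD0, hDc⟩ := hμ.exists_measureReal_pos_le (hA.diff hCm)
    (by rw [measureReal_sdiff hCA hCm]; linarith) (sub_pos.2 hlt)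
  have hstep : ∀ n, μ.real D / 2 ≤ μ.real (C (n + 1)) - μ.real (C n) := fun n => by
    have hCn := measureReal_mono (μ := μ) (subset_iUnion C n)
    linarith [(hC n).2.2 D (hD.trans (sdiff_subset_sdiff_right (subset_iUnion C n))) hDm
      (by linarith)]
  have hgap : Tendsto (fun n => μ.real (C (n + 1)) - μ.real (C n)) atTop (𝓝 0) := by
    simpa using (hlim.comp (tendsto_add_atTop_nat 1)).sub hlim
  linarith [ge_of_tendsto' hgap hstep]

end FiniteMeasure

section Bisectable

variable {ι : Type*}

def Bisectable (ν : ι → Measure Ω) : Prop :=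
  ∀ A, MeasurableSet A → ∃ B ⊆ A, MeasurableSet B ∧ ∀ i, (ν i).real B = (ν i).real A / 2

variable {ν : ι → Measure Ω} [∀ i, IsFiniteMeasure (ν i)]

theorem Bisectable.exists_dyadic_pieces (hν : Bisectable ν) {A : Set Ω} (hA : MeasurableSet A) :
    ∃ H : ℕ → Set Ω, (∀ n, H n ⊆ A) ∧ (∀ n, MeasurableSet (H n)) ∧ Pairwise (Disjoint on H) ∧
      ∀ n i, (ν i).real (H n) = ((2 : ℝ) ^ (n + 1))⁻¹ * (ν i).real A := by
  obtain ⟨R, hR0, hR⟩ := exists_seq_of_forall_exists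
    (R := fun R R' => R' ⊆ R ∧ ∀ i, (ν i).real R' = (ν i).real R / 2)
    (fun R (hR : R ⊆ A ∧ MeasurableSet R) => by
      obtain ⟨B, hBR, hB, hBv⟩ := hν R hR.2
      refine ⟨R \ B, ⟨sdiff_subset.trans hR.1, hR.2.diff hB⟩, sdiff_subset, fun i => ?_⟩
      rw [measureReal_sdiff hBR hB, hBv]
      ring) ⟨subset_rfl, hA⟩
  have hRv : ∀ n i, (ν i).real (R n) = ((2 : ℝ) ^ n)⁻¹ * (ν i).real A := fun n i => by
    induction n with
    | zero => simp [hR0]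
    | succ n ih => rw [(hR n).2.2 i, ih, pow_succ, mul_inv]; ring
  refine ⟨fun n => R n \ R (n + 1), fun n => sdiff_subset.trans (hR n).1.1,
    fun n => (hR n).1.2.diff (hR (n + 1)).1.2, (pairwise_disjoint_on _).2 fun m n hmn => ?_,
    fun n i => ?_⟩
  · have hanti : Antitone R := antitone_nat_of_succ_le fun n => (hR n).2.1
    exact disjoint_sdiff_left.mono_right (sdiff_subset.trans (hanti hmn))
  · rw [measureReal_sdiff (hR n).2.1 (hR (n + 1)).1.2, hRv, hRv, pow_succ, mul_inv]
    ring

theorem Bisectable.exists_subset_measureReal_eq_mul (hν : Bisectable ν) {A : Set Ω}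
    (hA : MeasurableSet A) {α : ℝ} (hα : α ∈ Icc (0 : ℝ) 1) :
    ∃ E ⊆ A, MeasurableSet E ∧ ∀ i, (ν i).real E = α * (ν i).real A := by
  obtain ⟨H, hHA, hHm, hHd, hHv⟩ := hν.exists_dyadic_pieces hA
  obtain ⟨d, hd⟩ := exists_hasSum_ofDigitsTerm hα
  -- `E` collects the pieces `H n` at the binary digits `d n = 1` of `α`.
  set G : ℕ → Set Ω := fun n => if d n = 0 then ∅ else H n
  have hGH : ∀ n, G n ⊆ H n := fun n => by dsimp only [G]; split_ifs <;> simp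
  have hGm : ∀ n, MeasurableSet (G n) := fun n => by dsimp only [G]; split_ifs <;> simp [hHm]
  refine ⟨⋃ n, G n, iUnion_subset fun n => (hGH n).trans (hHA n), .iUnion hGm, fun i => ?_⟩
  have hGv : ∀ n, (ν i).real (G n) = Real.ofDigitsTerm d n * (ν i).real A := fun n => by
    have hd01 : d n = 0 ∨ d n = 1 := by omega
    rcases hd01 with h | h <;> simp [G, Real.ofDigitsTerm, h, hHv]
  refine (hasSum_measureReal_iUnion hGm (hHd.mono fun m n h => h.mono (hGH m) (hGH n))).unique ?_
  simpa only [hGv] using hd.mul_right ((ν i).real A)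

structure IsBracket (ν : ι → Measure Ω) (σ : Measure Ω) (a : ι → ℝ) (c : ℝ) (L U : Set Ω) :
    Prop where
  measurableSet_left : MeasurableSet L
  measurableSet_right : MeasurableSet U
  left_eq : ∀ i, (ν i).real L = a i
  right_eq : ∀ i, (ν i).real U = a i
  left_le : σ.real L ≤ c
  le_right : c ≤ σ.real U

theorem Bisectable.exists_mid (hν : Bisectable ν) {L U : Set Ω} (hL : MeasurableSet L)
    (hU : MeasurableSet U) (hLU : ∀ i, (ν i).real L = (ν i).real U) :
    ∃ M, MeasurableSet M ∧ L ∩ U ⊆ M ∧ M ⊆ L ∪ U ∧ (∀ i, (ν i).real M = (ν i).real L) ∧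
      ∀ i, (ν i).real (L ∆ M) ≤ (ν i).real (L ∆ U) / 2 ∧
        (ν i).real (M ∆ U) ≤ (ν i).real (L ∆ U) / 2 := by
  -- Trade half of `U \ L` for half of `L \ U`.
  obtain ⟨X, hXs, hX, hXv⟩ := hν (U \ L) (hU.diff hL)
  obtain ⟨Y, hYs, hY, hYv⟩ := hν (L \ U) (hL.diff hU)
  have mem (x) := And.intro (@hXs x) (@hYs x)
  have hd₁ : Disjoint (L ∩ U) ((U \ L) \ X) := disjoint_left.2 fun x => by
    simp only [mem_inter_iff, Set.mem_sdiff]; tauto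
  have hd₂ : Disjoint (L ∩ U ∪ (U \ L) \ X) Y := disjoint_left.2 fun x => by
    have := mem x; simp only [mem_union, mem_inter_iff, Set.mem_sdiff] at *; tauto
  have hLM : L ∆ (L ∩ U ∪ (U \ L) \ X ∪ Y) ⊆ (U \ L) \ X ∪ (L \ U) \ Y := fun x => by
    have := mem x; simp only [mem_union, mem_inter_iff, Set.mem_sdiff, mem_symmDiff] at *; tauto
  have hMU : (L ∩ U ∪ (U \ L) \ X ∪ Y) ∆ U ⊆ X ∪ Y := fun x => by
    have := mem x; simp only [mem_union, mem_inter_iff, Set.mem_sdiff, mem_symmDiff] at *; tauto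
  refine ⟨L ∩ U ∪ (U \ L) \ X ∪ Y, ((hL.inter hU).union ((hU.diff hL).diff hX)).union hY,
    subset_union_left.trans subset_union_left, fun x => ?_, fun i => ?_, fun i => ⟨?_, ?_⟩⟩
  · have := mem x; simp only [mem_union, mem_inter_iff, Set.mem_sdiff] at *; tauto
  all_goals
    have hLsplit := measureReal_inter_add_sdiff (μ := ν i) (s := L) hU
    have hUsplit := measureReal_inter_add_sdiff (μ := ν i) (s := U) hL
    have hgap : (ν i).real (L ∆ U) = (ν i).real (L \ U) + (ν i).real (U \ L) :=
      measureReal_union disjoint_sdiff_sdiff (hU.diff hL)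
    have hX' := measureReal_sdiff (μ := ν i) hXs hX
    have hY' := measureReal_sdiff (μ := ν i) hYs hY
    rw [inter_comm] at hUsplit
    have := hLU i; have := hXv i; have := hYv i
  · rw [measureReal_union hd₂ hY, measureReal_union hd₁ ((hU.diff hL).diff hX)]
    linarith
  · linarith [measureReal_mono (μ := ν i) hLM, measureReal_union_le (μ := ν i)
      ((U \ L) \ X) ((L \ U) \ Y)]
  · linarith [measureReal_mono (μ := ν i) hMU, measureReal_union_le (μ := ν i) X Y]

variable {σ : Measure Ω} {a : ι → ℝ} {c : ℝ}

theorem Bisectable.exists_isBracket_refine (hν : Bisectable ν) {L U : Set Ω}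
    (h : IsBracket ν σ a c L U) :
    ∃ L' U', IsBracket ν σ a c L' U' ∧ L ∩ U ⊆ L' ∩ U' ∧ L' ∪ U' ⊆ L ∪ U ∧
      ∀ i, (ν i).real (L' ∆ U') ≤ (ν i).real (L ∆ U) / 2 := by
  obtain ⟨M, hM, hLUM, hMLU, hMv, hMgap⟩ := hν.exists_mid h.measurableSet_left
    h.measurableSet_right fun i => (h.left_eq i).trans (h.right_eq i).symm
  rcases le_or_gt (σ.real M) c with hMc | hcM
  · exact ⟨M, U, ⟨hM, h.measurableSet_right, fun i => (hMv i).trans (h.left_eq i), h.right_eq,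
      hMc, h.le_right⟩, subset_inter hLUM inter_subset_right,
      union_subset hMLU subset_union_right, fun i => (hMgap i).2⟩
  · exact ⟨L, M, ⟨h.measurableSet_left, hM, h.left_eq, fun i => (hMv i).trans (h.left_eq i),
      h.left_le, hcM.le⟩, subset_inter inter_subset_left hLUM,
      union_subset subset_union_left hMLU, fun i => (hMgap i).1⟩

theorem Bisectable.exists_null_gap [IsFiniteMeasure σ] (hν : Bisectable ν) {L U : Set Ω}
    (h : IsBracket ν σ a c L U) :
    ∃ F W, MeasurableSet F ∧ MeasurableSet W ∧ F ⊆ W ∧ W ⊆ L ∪ U ∧ σ.real F ≤ c ∧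
      c ≤ σ.real W ∧ (∀ i, (ν i).real F ≤ a i ∧ a i ≤ (ν i).real W) ∧
      ∀ i, (ν i).real (W \ F) = 0 := by
  obtain ⟨p, hp0, hp⟩ := exists_seq_of_forall_exists
    (P := fun p : Set Ω × Set Ω => IsBracket ν σ a c p.1 p.2)
    (R := fun p q => p.1 ∩ p.2 ⊆ q.1 ∩ q.2 ∧ q.1 ∪ q.2 ⊆ p.1 ∪ p.2 ∧
      ∀ i, (ν i).real (q.1 ∆ q.2) ≤ (ν i).real (p.1 ∆ p.2) / 2)
    (fun p hp => by
      obtain ⟨L', U', h'⟩ := hν.exists_isBracket_refine hp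
      exact ⟨(L', U'), h'⟩) (a₀ := (L, U)) h
  have hF : Monotone fun n => (p n).1 ∩ (p n).2 := monotone_nat_of_le_succ fun n => (hp n).2.1
  have hW : Antitone fun n => (p n).1 ∪ (p n).2 := antitone_nat_of_succ_le fun n => (hp n).2.2.1
  have hWm : ∀ n, MeasurableSet ((p n).1 ∪ (p n).2) := fun n =>
    (hp n).1.measurableSet_left.union (hp n).1.measurableSet_right
  have hgap : ∀ n i, (ν i).real ((p n).1 ∆ (p n).2) ≤ (1 / 2) ^ n * (ν i).real (L ∆ U) :=
    fun n i => by
      induction n with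
      | zero => simp [hp0]
      | succ n ih => rw [pow_succ]; linarith [(hp n).2.2.2 i]
  refine ⟨⋃ n, (p n).1 ∩ (p n).2, ⋂ n, (p n).1 ∪ (p n).2, .iUnion fun n =>
    (hp n).1.measurableSet_left.inter (hp n).1.measurableSet_right, .iInter hWm,
    iUnion_subset fun m => subset_iInter fun n => ?_, iInter_subset_of_subset 0 (by simp [hp0]),
    le_of_tendsto' (tendsto_measureReal_iUnion_atTop hF) fun n =>
      (measureReal_mono inter_subset_left).trans (hp n).1.left_le,
    ge_of_tendsto' (tendsto_measureReal_iInter_atTop hWm hW) fun n =>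
      (hp n).1.le_right.trans (measureReal_mono subset_union_right),
    fun i => ⟨?_, ?_⟩, fun i => ?_⟩
  · exact (hF (le_max_left m n)).trans (inter_subset_left.trans
      (subset_union_left.trans (hW (le_max_right m n))))
  · exact le_of_tendsto' (tendsto_measureReal_iUnion_atTop hF) fun n =>
      (measureReal_mono inter_subset_left).trans ((hp n).1.left_eq i).le
  · exact ge_of_tendsto' (tendsto_measureReal_iInter_atTop hWm hW) fun n =>
      ((hp n).1.left_eq i).ge.trans (measureReal_mono subset_union_left)
  · have hsub : ∀ n, (⋂ n, (p n).1 ∪ (p n).2) \ ⋃ n, (p n).1 ∩ (p n).2 ⊆ (p n).1 ∆ (p n).2 :=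
      fun n => symmDiff_eq_sup_sdiff_inf (p n).1 (p n).2 ▸
        sdiff_subset_sdiff (iInter_subset _ n) (subset_iUnion (fun n => (p n).1 ∩ (p n).2) n)
    refine le_antisymm (ge_of_tendsto' (x := atTop) ?_ fun n =>
      (measureReal_mono (μ := ν i) (hsub n)).trans (hgap n i)) measureReal_nonneg
    simpa using (tendsto_pow_atTop_nhds_zero_of_lt_one (by norm_num : (0 : ℝ) ≤ 1 / 2)
      (by norm_num)).mul_const ((ν i).real (L ∆ U))

theorem Bisectable.exists_measureReal_eq [IsFiniteMeasure σ] (hν : Bisectable ν)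
    (hσ : IsAtomless σ.real) {L U : Set Ω} (h : IsBracket ν σ a c L U) :
    ∃ B ⊆ L ∪ U, MeasurableSet B ∧ (∀ i, (ν i).real B = a i) ∧ σ.real B = c := by
  obtain ⟨F, W, hF, hW, hFW, hWLU, hFc, hcW, hFaW, hnull⟩ := hν.exists_null_gap h
  obtain ⟨R, hR, hRm, hRv⟩ := hσ.exists_subset_measureReal_eq (hW.diff hF) (sub_nonneg.2 hFc)
    (c := c - σ.real F) (by rw [measureReal_sdiff hFW hF]; linarith)
  have hBW : F ∪ R ⊆ W := union_subset hFW (hR.trans sdiff_subset)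
  refine ⟨F ∪ R, hBW.trans hWLU, hF.union hRm, fun i => ?_, ?_⟩
  · obtain ⟨h₁, h₂⟩ :=
      measureReal_eq_measureReal_of_between_null_sdiff subset_union_left hBW (hnull i)
    linarith [hFaW i]
  · rw [measureReal_union (disjoint_sdiff_right.mono_right hR) hRm, hRv]
    ring

theorem Bisectable.of_option {ν : Option ι → Measure Ω} [∀ i, IsFiniteMeasure (ν i)]
    (hν : Bisectable fun i => ν (some i)) (hnone : IsAtomless (ν none).real) : Bisectable ν := by
  intro A hA
  obtain ⟨X, hXA, hX, hXv⟩ := hν A hA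
  have hY : ∀ i, (ν (some i)).real (A \ X) = (ν (some i)).real A / 2 := fun i => by
    rw [measureReal_sdiff hXA hX, hXv]
    ring
  have hA' := measureReal_sdiff (μ := ν none) hXA hX
  -- The `ν none`-values of `X` and `A \ X` add up to that of `A`, so one order is a bracket.
  obtain ⟨B, hB, hBm, hBs, hBn⟩ : ∃ B ⊆ X ∪ A \ X, MeasurableSet B ∧
      (∀ i, (ν (some i)).real B = (ν (some i)).real A / 2) ∧
      (ν none).real B = (ν none).real A / 2 := by
    rcases le_total ((ν none).real X) ((ν none).real A / 2) with h | h
    · exact hν.exists_measureReal_eq hnone ⟨hX, hA.diff hX, hXv, hY, h, by linarith⟩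
    · obtain ⟨B, hB, hBm, hBv⟩ := hν.exists_measureReal_eq hnone
        ⟨hA.diff hX, hX, hY, hXv, by linarith, h⟩
      exact ⟨B, union_comm X _ ▸ hB, hBm, hBv⟩
  refine ⟨B, union_sdiff_cancel hXA ▸ hB, hBm, ?_⟩
  rintro (_ | i)
  exacts [hBn, hBs i]

theorem bisectable_of_isAtomless [Finite ι] (ν : ι → Measure Ω) [∀ i, IsFiniteMeasure (ν i)]
    (hν : ∀ i, IsAtomless (ν i).real) : Bisectable ν := by
  revert ν
  refine Finite.induction_empty_option (P := fun ι => ∀ (ν : ι → Measure Ω)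
    [∀ i, IsFiniteMeasure (ν i)], (∀ i, IsAtomless (ν i).real) → Bisectable ν) ?_ ?_ ?_ ι
  · intro α β e h ν _ hν A hA
    obtain ⟨B, hBA, hB, hBv⟩ := h (fun a => ν (e a)) (fun a => hν (e a)) A hA
    exact ⟨B, hBA, hB, e.surjective.forall.2 hBv⟩
  · exact fun _ _ _ A hA => ⟨A, subset_rfl, hA, fun i => i.elim⟩
  · exact fun h ν _ hν => Bisectable.of_option (h _ fun i => hν (some i)) (hν none)

theorem exists_subset_measureReal_eq_mul [Finite ι] (ν : ι → Measure Ω)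
    [∀ i, IsFiniteMeasure (ν i)] (hν : ∀ i, IsAtomless (ν i).real) {A : Set Ω}
    (hA : MeasurableSet A) {α : ℝ} (hα : α ∈ Icc (0 : ℝ) 1) :
    ∃ E ⊆ A, MeasurableSet E ∧ ∀ i, (ν i).real E = α * (ν i).real A :=
  (bisectable_of_isAtomless ν hν).exists_subset_measureReal_eq_mul hA hα

end Bisectable

namespace SignedMeasure

theorem isAtomless_neg {μ : SignedMeasure Ω} (h : IsAtomless μ) :
    IsAtomless (-μ : SignedMeasure Ω) :=
  fun A hA hA0 => by simpa using h A hA (by simpa using hA0)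

theorem isAtomless_posPart {μ : SignedMeasure Ω} (h : IsAtomless μ) :
    IsAtomless μ.toJordanDecomposition.posPart.real := by
  obtain ⟨s, hs, hpos, -, hP, -⟩ := μ.toJordanDecomposition_spec
  intro A hA hA0
  rw [hP, toMeasureOfZeroLE_real_apply _ hpos hs hA] at hA0 ⊢
  obtain ⟨B, hBA, hB, hB0, hBA'⟩ := h (s ∩ A) (hs.inter hA) hA0
  refine ⟨B, hBA.trans inter_subset_right, hB, ?_⟩
  rw [toMeasureOfZeroLE_real_apply _ hpos hs hB, inter_eq_right.2 (hBA.trans inter_subset_left)]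
  exact ⟨hB0, hBA'⟩

theorem isAtomless_negPart {μ : SignedMeasure Ω} (h : IsAtomless μ) :
    IsAtomless μ.toJordanDecomposition.negPart.real := by
  simpa [toJordanDecomposition_neg, JordanDecomposition.neg_posPart] using
    isAtomless_posPart (isAtomless_neg h)

end SignedMeasure

end MeasureTheory

/-- Weak form of Lyapunov's convexity theorem for finitely many non-atomic finite
signed measures. -/
theorem stmt8 {Ω : Type*} [MeasurableSpace Ω] (k : ℕ)
    (μ : Fin k → MeasureTheory.SignedMeasure Ω)
    (hna : ∀ i, ∀ A : Set Ω, MeasurableSet A → μ i A ≠ 0 →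
      ∃ B ⊆ A, MeasurableSet B ∧ μ i B ≠ 0 ∧ μ i B ≠ μ i A) :
    ∀ α : ℝ, α ∈ Set.Icc (0 : ℝ) 1 →
      ∃ E : Set Ω, MeasurableSet E ∧ ∀ i, μ i E = α * μ i Set.univ := by
  intro α hα
  let ν : Fin k ⊕ Fin k → Measure Ω :=
    Sum.elim (fun i => (μ i).toJordanDecomposition.posPart)
      (fun i => (μ i).toJordanDecomposition.negPart)
  have : ∀ j, IsFiniteMeasure (ν j) := by rintro (i | i) <;> dsimp [ν] <;> infer_instance
  obtain ⟨E, -, hE, hEν⟩ := exists_subset_measureReal_eq_mul ν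
    (by rintro (i | i); exacts [SignedMeasure.isAtomless_posPart (hna i),
      SignedMeasure.isAtomless_negPart (hna i)]) MeasurableSet.univ hα
  refine ⟨E, hE, fun i => ?_⟩
  rw [SignedMeasure.apply_eq_posPart_real_sub_negPart_real _ hE,
    SignedMeasure.apply_eq_posPart_real_sub_negPart_real _ MeasurableSet.univ]
  have h₁ := hEν (.inl i)
  have h₂ := hEν (.inr i)
  dsimp [ν] at h₁ h₂
  rw [h₁, h₂]
  ring
end

section
/- Let q be an everywhere-positive probability mass function on a finite set X, q_u a probability mass function, and define the dual function D(λ) = λ·b − (1−λ)·log Z^†(λ) for λ ∈ [0,1), where Z^†(λ) = Σ_x q(x)^{1/(1-λ)} / q_u(x)^{λ/(1-λ)} and q_u is everywhere positive. Then D(λ) = min over probability mass functions p of [D_KL(p‖q) + λ·(b − D_KL(p‖q_u))]. -/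
/-!
Write `g = q^{1/(1-λ)} / q_u^{λ/(1-λ)}` and `p* = g / Z`. Pointwise
`(1-λ) log g = log q - λ log q_u`, so for every distribution `p` the Lagrangian equals
`λ b - (1-λ) log Z + (1-λ) D_KL(p‖p*)`. Gibbs' inequality makes the last term nonnegative,
and it vanishes at `p = p*`.
-/

open Real BigOperators

noncomputable section

variable {X : Type*} [Fintype X]

/-- The weight at `x` of the unnormalized minimizer of `D_KL(p‖q) - λ D_KL(p‖q_u)`, where
`a = q x` and `b = q_u x`. -/
def tiltedWeight (lam a b : ℝ) : ℝ := a ^ (1 / (1 - lam)) / b ^ (lam / (1 - lam))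

lemma tiltedWeight_pos (lam : ℝ) {a b : ℝ} (ha : 0 < a) (hb : 0 < b) :
    0 < tiltedWeight lam a b :=
  div_pos (rpow_pos_of_pos ha _) (rpow_pos_of_pos hb _)

lemma one_sub_mul_log_tiltedWeight {lam a b : ℝ} (hlam : lam ≠ 1) (ha : 0 < a) (hb : 0 < b) :
    (1 - lam) * log (tiltedWeight lam a b) = log a - lam * log b := by
  have h : 1 - lam ≠ 0 := sub_ne_zero.mpr hlam.symm
  rw [tiltedWeight, log_div (rpow_pos_of_pos ha _).ne' (rpow_pos_of_pos hb _).ne',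
    log_rpow ha, log_rpow hb]
  field_simp

lemma sum_sub_sum_le_klDiv {p r : X → ℝ} (hp : ∀ x, 0 ≤ p x) (hr : ∀ x, 0 < r x) :
    ∑ x, p x - ∑ x, r x ≤ klDiv p r := by
  have hterm : ∀ x, p x - r x ≤ p x * log (p x / r x) := fun x => by
    -- the gap is `r x * klFun (p x / r x)`
    have h := mul_nonneg (hr x).le (InformationTheory.klFun_nonneg (div_nonneg (hp x) (hr x).le))
    rw [InformationTheory.klFun_apply] at h
    have hr0 := (hr x).ne'
    field_simp at h
    linarith
  rw [← Finset.sum_sub_distrib]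
  exact Finset.sum_le_sum fun x _ => hterm x

lemma klDiv_self_s11 {r : X → ℝ} (hr : ∀ x, r x ≠ 0) : klDiv r r = 0 :=
  Finset.sum_eq_zero fun x _ => by rw [div_self (hr x), log_one, mul_zero]

lemma klDiv_div_const (p : X → ℝ) {r : X → ℝ} (hr : ∀ x, r x ≠ 0) {Z : ℝ} (hZ : Z ≠ 0) :
    klDiv p (fun x => r x / Z) = klDiv p r + (∑ x, p x) * log Z := by
  rw [klDiv, klDiv, Finset.sum_mul, ← Finset.sum_add_distrib]
  refine Finset.sum_congr rfl fun x _ => ?_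
  rcases eq_or_ne (p x) 0 with h | h
  · simp [h]
  · rw [div_div_eq_mul_div, mul_div_right_comm, log_mul (div_ne_zero h (hr x)) hZ]
    ring

lemma klDiv_sub_mul_klDiv (p : X → ℝ) {q qu : X → ℝ} (hq : ∀ x, 0 < q x)
    (hqu : ∀ x, 0 < qu x) {lam : ℝ} (hlam : lam ≠ 1) :
    klDiv p q - lam * klDiv p qu =
      (1 - lam) * klDiv p (fun x => tiltedWeight lam (q x) (qu x)) := by
  rw [klDiv, klDiv, klDiv, Finset.mul_sum, Finset.mul_sum, ← Finset.sum_sub_distrib]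
  refine Finset.sum_congr rfl fun x _ => ?_
  rcases eq_or_ne (p x) 0 with h | h
  · simp [h]
  · rw [log_div h (hq x).ne', log_div h (hqu x).ne',
      log_div h (tiltedWeight_pos lam (hq x) (hqu x)).ne']
    linear_combination p x * one_sub_mul_log_tiltedWeight hlam (hq x) (hqu x)

theorem stmt11_general [Nonempty X] (q qu : X → ℝ)
    (hqpos : ∀ x, 0 < q x)
    (hqupos : ∀ x, 0 < qu x)
    (b lam : ℝ) (hlam1 : lam < 1)
    (Z : ℝ) (hZ : Z = ∑ x, q x ^ (1 / (1 - lam)) / qu x ^ (lam / (1 - lam))) :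
    IsLeast {v | ∃ p : X → ℝ, IsPMF p ∧ v = klDiv p q + lam * (b - klDiv p qu)}
      (lam * b - (1 - lam) * Real.log Z) := by
  set g : X → ℝ := fun x => tiltedWeight lam (q x) (qu x)
  have hZg : Z = ∑ x, g x := hZ
  have hg : ∀ x, 0 < g x := fun x => tiltedWeight_pos lam (hqpos x) (hqupos x)
  have hZpos : 0 < Z := hZg ▸ Finset.sum_pos (fun x _ => hg x) Finset.univ_nonempty
  set pstar : X → ℝ := fun x => g x / Z
  have hpstar : ∀ x, 0 < pstar x := fun x => div_pos (hg x) hZpos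
  have hpstar_pmf : IsPMF pstar := ⟨fun x => (hpstar x).le, by
    rw [← Finset.sum_div, ← hZg, div_self hZpos.ne']⟩
  have lagrangian_eq : ∀ p, IsPMF p → klDiv p q + lam * (b - klDiv p qu) =
      lam * b - (1 - lam) * log Z + (1 - lam) * klDiv p pstar := fun p hp => by
    have h := klDiv_sub_mul_klDiv p hqpos hqupos hlam1.ne
    rw [klDiv_div_const p (fun x => (hg x).ne') hZpos.ne', hp.2]
    linear_combination h
  refine ⟨⟨pstar, hpstar_pmf, ?_⟩, ?_⟩
  · rw [lagrangian_eq pstar hpstar_pmf, klDiv_self_s11 fun x => (hpstar x).ne']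
    ring
  · rintro v ⟨p, hp, rfl⟩
    have hgibbs := sum_sub_sum_le_klDiv hp.1 hpstar
    rw [hp.2, hpstar_pmf.2, sub_self] at hgibbs
    rw [lagrangian_eq p hp]
    linarith [mul_nonneg (sub_pos.2 hlam1).le hgibbs]

/-- The dual function of reverse KL-constrained unlearning equals the minimum of the
Lagrangian over the probability simplex. -/
theorem stmt11 [Nonempty X] (q qu : X → ℝ)
    (hq : IsPMF q) (hqpos : ∀ x, 0 < q x)
    (hqu : IsPMF qu) (hqupos : ∀ x, 0 < qu x)
    (b lam : ℝ) (hlam0 : 0 ≤ lam) (hlam1 : lam < 1)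
    (Z : ℝ) (hZ : Z = ∑ x, q x ^ (1 / (1 - lam)) / qu x ^ (lam / (1 - lam))) :
    IsLeast {v | ∃ p : X → ℝ, IsPMF p ∧ v = klDiv p q + lam * (b - klDiv p qu)}
      (lam * b - (1 - lam) * Real.log Z) :=
  stmt11_general q qu hqpos hqupos b lam hlam1 Z hZ
end
end
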